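/- arXiv:1010.1473 — 2 statements merged into one kernel-verified Lean document; each statement's English description precedes it below -/
import Mathlib

section
/- Let d ≥ 2 and let u, v be monomials of degree d with u ≥_lex v, x_1 | u, ν_1(u) = 1, and suppose x_n·u ≥_lex x_1·v (equivalently v ≤_lex x_2^{d-1}x_n). Let I = (L(u,v)). Then for every k ≥ 2 the monomial m = u·(x_2^{d-1}x_n)^{k-1}/x_1 satisfies m ∉ I^k and x_i·m ∈ I^k for all i; hence depth(S/I^k) = 0. -/
open MvPolynomial

noncomputable section

namespace LexPaper

/-- total degree of an exponent vector -/
def deg {sigma : Type*} (a : sigma  →₀  ℕ) : ℕ := a.sum fun _ e => e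

/-- the monomial x^a as an element of the polynomial ring -/
def mon (k : Type*) [Field k] {sigma : Type*} (a : sigma  →₀  ℕ) : MvPolynomial sigma k :=
  MvPolynomial.monomial a 1

/-- `lexLe a b` : a ≤_lex b, where x_1 > x_2 > ... > x_n (index 0 is the largest variable). -/
def lexLe {n : ℕ} (a b : Fin n  →₀  ℕ) : Prop := toLex a ≤ toLex b

/-- `lexLt a b` : a <_lex b. -/
def lexLt {n : ℕ} (a b : Fin n  →₀  ℕ) : Prop := toLex a < toLex b

/-- the lexsegment set L(u,v) : all exponent vectors of degree d between v and u in lex order -/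
def lexSeg {n : ℕ} (d : ℕ) (u v : Fin n  →₀  ℕ) : Set (Fin n  →₀  ℕ) :=
  {m | deg m = d  ∧  lexLe v m  ∧  lexLe m u}

/-- the lexsegment ideal (L(u,v)) -/
def lexIdeal (k : Type*) [Field k] {n : ℕ} (d : ℕ) (u v : Fin n  →₀  ℕ) :
    Ideal (MvPolynomial (Fin n) k) :=
  Ideal.span (mon k '' lexSeg d u v)

/-- the maximal graded ideal (x_1, ..., x_n) -/
def mMax (k : Type*) [Field k] (n : ℕ) : Ideal (MvPolynomial (Fin n) k) :=
  Ideal.span (Set.range (X : Fin n -> MvPolynomial (Fin n) k))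

/-- depth of S/I: the supremum of lengths of regular sequences on S/I consisting of
elements of the maximal graded ideal -/
def quotDepth (k : Type*) [Field k] {n : ℕ} (I : Ideal (MvPolynomial (Fin n) k)) : ℕ :=
  sSup {r : ℕ | ∃ rs : List (MvPolynomial (Fin n) k), rs.length = r  ∧ 
    (∀ x ∈ rs, x ∈ mMax k n)  ∧  RingTheory.Sequence.IsRegular (MvPolynomial (Fin n) k ⧸ I) rs}


/-!
Write `u = x_1 u'`. Every `x_i u'` lies in `L(u,v)`: it is `≤_lex x_1 u' = u`, and
`≥_lex x_n u' ≥_lex v` by the hypothesis `x_n u ≥_lex x_1 v`. Since `u'` is free of `x_1`,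
`u' ≤_lex x_2^(d-1)`, so `w = x_2^(d-1) x_n ≥_lex x_n u' ≥_lex v` lies in `L(u,v)` as well. Hence
`x_i m = (x_i u') w^(t-1) ∈ I^t`, whereas `m` has degree `td - 1`, below the initial degree of
`I^t`, so `m ∉ I^t`. The class of `m` is then a nonzero element of `S/I^t` killed by the maximal
ideal, so no element of the maximal ideal is regular on `S/I^t`.
-/

lemma deg_eq_degree {σ : Type*} (a : σ →₀ ℕ) : deg a = a.degree := rfl

lemma deg_add_single {σ : Type*} (a : σ →₀ ℕ) (i : σ) (c : ℕ) :
    deg (a + Finsupp.single i c) = deg a + c := by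
  rw [deg_eq_degree, deg_eq_degree, map_add, Finsupp.degree_single]

lemma add_apply_le_deg {n : ℕ} (a : Fin n →₀ ℕ) {i j : Fin n} (hij : i ≠ j) :
    a i + a j ≤ deg a := by
  rw [deg_eq_degree, Finsupp.degree_eq_sum, ← Finset.sum_pair hij]
  exact Finset.sum_le_sum_of_subset (Finset.subset_univ _)

lemma mon_mul {k : Type*} [Field k] {σ : Type*} (a b : σ →₀ ℕ) :
    mon k a * mon k b = mon k (a + b) := by
  simp [mon, monomial_mul]

lemma span_mon_pow_le {k : Type*} [Field k] {σ : Type*} {S : Set (σ →₀ ℕ)} {N : ℕ}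
    (hS : ∀ a ∈ S, N ≤ deg a) (t : ℕ) :
    Ideal.span (mon k '' S) ^ t ≤ Ideal.span (mon k '' {a | t * N ≤ deg a}) := by
  induction t with
  | zero =>
    rw [pow_zero, Ideal.one_eq_top, top_le_iff, Ideal.eq_top_iff_one]
    exact Ideal.subset_span ⟨0, by simp, by simp [mon]⟩
  | succ t ih =>
    rw [pow_succ]
    refine (Ideal.mul_mono_left ih).trans ?_
    rw [Ideal.span_mul_span']
    refine Ideal.span_mono ?_
    rintro _ ⟨_, ⟨a, ha, rfl⟩, _, ⟨b, hb, rfl⟩, rfl⟩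
    refine ⟨a + b, ?_, (mon_mul a b).symm⟩
    have hb' := hS b hb
    simp only [Set.mem_ofPred_eq, deg_eq_degree, map_add] at ha hb' ⊢
    rw [Nat.succ_mul]
    exact add_le_add ha hb'

lemma mon_notMem_span_pow {k : Type*} [Field k] {σ : Type*} {S : Set (σ →₀ ℕ)} {N t : ℕ}
    (hS : ∀ a ∈ S, N ≤ deg a) {m : σ →₀ ℕ} (hm : deg m < t * N) :
    mon k m ∉ Ideal.span (mon k '' S) ^ t := by
  intro hmem
  obtain ⟨a, ha, ham⟩ := mem_ideal_span_monomial_image.mp (span_mon_pow_le hS t hmem) m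
    (by classical simp [mon, coeff_monomial])
  have : deg a ≤ deg m := Finsupp.degree_mono ham
  exact absurd (ha.trans this) (by simpa using hm)

lemma mul_mem_of_mem_mMax {k : Type*} [Field k] {n : ℕ} {I : Ideal (MvPolynomial (Fin n) k)}
    {f x : MvPolynomial (Fin n) k} (hX : ∀ i, X i * f ∈ I) (hx : x ∈ mMax k n) : x * f ∈ I := by
  have : mMax k n ≤ I.colon {f} :=
    Ideal.span_le.mpr (Set.range_subset_iff.mpr fun i => Submodule.mem_colon_singleton.mpr (hX i))
  exact Submodule.mem_colon_singleton.mp (this hx)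

lemma quotDepth_eq_zero_of_forall_X_mul_mem {k : Type*} [Field k] {n : ℕ}
    {I : Ideal (MvPolynomial (Fin n) k)} {f : MvPolynomial (Fin n) k} (hf : f ∉ I)
    (hX : ∀ i, X i * f ∈ I) : quotDepth k I = 0 := by
  refine Nat.le_zero.mp (csSup_le' ?_)
  rintro _ ⟨_ | ⟨x, rs⟩, rfl, hmax, hreg⟩
  · rfl
  · have hxreg := ((RingTheory.Sequence.isRegular_cons_iff _ _ _).mp hreg).1
    have hzero : Ideal.Quotient.mk I f = 0 := hxreg <| by
      change Ideal.Quotient.mk I (x * f) = x • 0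
      rw [smul_zero, Ideal.Quotient.eq_zero_iff_mem]
      exact mul_mem_of_mem_mMax hX (hmax x List.mem_cons_self)
    exact absurd (Ideal.Quotient.eq_zero_iff_mem.mp hzero) hf

lemma lexLe_single_deg {n : ℕ} {a : Fin n →₀ ℕ} {i : Fin n} (h : ∀ j < i, a j = 0) :
    lexLe a (Finsupp.single i (deg a)) := by
  by_contra hlt
  obtain ⟨j, heq, hj⟩ := Finsupp.Lex.lt_iff.mp (not_le.mp hlt)
  simp only [ofLex_toLex] at heq hj
  rcases lt_trichotomy j i with hji | rfl | hij
  · rw [h j hji] at hj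
    exact Nat.not_lt_zero _ hj
  · rw [Finsupp.single_eq_same] at hj
    exact absurd (Finsupp.le_degree j a) (not_le.mpr hj)
  · have hai := heq i hij
    rw [Finsupp.single_eq_same] at hai
    rw [Finsupp.single_eq_of_ne hij.ne'] at hj
    have := add_apply_le_deg a hij.ne
    omega

lemma lexLt_of_apply_zero_lt {n : ℕ} {a b : Fin (n + 1) →₀ ℕ} (h : a 0 < b 0) : lexLt a b :=
  Finsupp.Lex.lt_iff.mpr ⟨0, fun j hj => absurd hj (Fin.not_lt_zero j), h⟩

lemma lexLe_add_single_of_le {n : ℕ} (a : Fin n →₀ ℕ) {i j : Fin n} (h : i ≤ j) :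
    lexLe (a + Finsupp.single j 1) (a + Finsupp.single i 1) :=
  add_le_add_right (Finsupp.Lex.single_le_iff.mpr h) (toLex a)

section SocleMonomial

open Finsupp

variable {n d : ℕ} {u v : Fin (n + 2) →₀ ℕ}

def sndPowMulLast (n d : ℕ) : Fin (n + 2) →₀ ℕ := single 1 (d - 1) + single (Fin.last (n + 1)) 1

-- `u (x_2^(d-1) x_n)^(t-1) / x_1`, the variables `x_1, x_2, x_n` being indexed by `0, 1, last`.
def socleMonomial (d t : ℕ) (u : Fin (n + 2) →₀ ℕ) : Fin (n + 2) →₀ ℕ :=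
  u + (t - 1) • sndPowMulLast n d - single 0 1

lemma deg_sndPowMulLast (hd : 1 ≤ d) : deg (sndPowMulLast n d) = d := by
  rw [sndPowMulLast, deg_add_single, deg_eq_degree, degree_single]
  omega

lemma single_zero_le (hu0 : u 0 = 1) : single 0 1 ≤ u :=
  single_le_iff.mpr hu0.ge

lemma deg_sub_single_zero (hu : deg u = d) (hu0 : u 0 = 1) : deg (u - single 0 1) + 1 = d := by
  rw [← deg_add_single, tsub_add_cancel_of_le (single_zero_le hu0), hu]

lemma lexLe_sub_single_zero_add_last (hu0 : u 0 = 1)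
    (hlex : lexLe (v + single 0 1) (u + single (Fin.last (n + 1)) 1)) :
    lexLe v (u - single 0 1 + single (Fin.last (n + 1)) 1) := by
  refine le_of_add_le_add_right (a := toLex (single (0 : Fin (n + 2)) 1)) ?_
  rwa [← toLex_add, ← toLex_add, add_right_comm, tsub_add_cancel_of_le (single_zero_le hu0)]

lemma sub_single_zero_add_single_mem_lexSeg (hu : deg u = d) (hu0 : u 0 = 1)
    (hlex : lexLe (v + single 0 1) (u + single (Fin.last (n + 1)) 1)) (i : Fin (n + 2)) :
    u - single 0 1 + single i 1 ∈ lexSeg d u v := by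
  refine ⟨?_, (lexLe_sub_single_zero_add_last hu0 hlex).trans
    (lexLe_add_single_of_le _ (Fin.le_last i)), ?_⟩
  · rw [deg_add_single, deg_sub_single_zero hu hu0]
  · have := lexLe_add_single_of_le (u - single 0 1) (Fin.zero_le i)
    rwa [tsub_add_cancel_of_le (single_zero_le hu0)] at this

lemma sndPowMulLast_mem_lexSeg (hu : deg u = d) (hu0 : u 0 = 1)
    (hlex : lexLe (v + single 0 1) (u + single (Fin.last (n + 1)) 1)) :
    sndPowMulLast n d ∈ lexSeg d u v := by
  refine ⟨deg_sndPowMulLast (hu0 ▸ hu ▸ le_degree 0 u), ?_, ?_⟩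
  · have hle : lexLe (u - single 0 1) (single 1 (d - 1)) := by
      have := lexLe_single_deg (a := u - single 0 1) (i := 1) fun j hj => by
        rw [(Fin.lt_one_iff j).mp hj, tsub_apply, hu0, single_eq_same]
      rwa [show deg (u - single 0 1) = d - 1 by have := deg_sub_single_zero hu hu0; omega] at this
    exact (lexLe_sub_single_zero_add_last hu0 hlex).trans
      (add_le_add_left hle (toLex (single (Fin.last (n + 1)) 1)))
  · refine le_of_lt (lexLt_of_apply_zero_lt ?_)
    simp [sndPowMulLast, hu0]

lemma socleMonomial_eq (hu0 : u 0 = 1) (t : ℕ) :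
    socleMonomial d t u = u - single 0 1 + (t - 1) • sndPowMulLast n d :=
  (tsub_add_eq_add_tsub (single_zero_le hu0)).symm

lemma mon_socleMonomial_notMem {k : Type*} [Field k] (hu : deg u = d) (hu0 : u 0 = 1) {t : ℕ}
    (ht : 1 ≤ t) : mon k (socleMonomial d t u) ∉ lexIdeal k d u v ^ t := by
  refine mon_notMem_span_pow (N := d) (fun a ha => ha.1.ge) ?_
  have hw : deg (sndPowMulLast n d) = d := deg_sndPowMulLast (hu0 ▸ hu ▸ le_degree 0 u)
  have hdeg : deg (socleMonomial d t u) + 1 = t * d := by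
    obtain ⟨s, rfl⟩ := Nat.exists_eq_add_of_le' ht
    rw [socleMonomial_eq hu0, deg_eq_degree, map_add, map_nsmul, ← deg_eq_degree,
      ← deg_eq_degree, hw, smul_eq_mul, Nat.add_sub_cancel, add_one_mul,
      ← deg_sub_single_zero hu hu0]
    omega
  omega

lemma X_mul_mon_socleMonomial_mem {k : Type*} [Field k] (hu : deg u = d) (hu0 : u 0 = 1)
    (hlex : lexLe (v + single 0 1) (u + single (Fin.last (n + 1)) 1)) {t : ℕ} (ht : 1 ≤ t)
    (i : Fin (n + 2)) : X i * mon k (socleMonomial d t u) ∈ lexIdeal k d u v ^ t := by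
  have hfactor : X i * mon k (socleMonomial d t u) =
      mon k (u - single 0 1 + single i 1) * mon k (sndPowMulLast n d) ^ (t - 1) := by
    rw [socleMonomial_eq hu0, mon, mon, mon, monomial_pow, one_pow, X, monomial_mul,
      monomial_mul, one_mul, add_comm (single i 1), add_right_comm]
  have hpow : lexIdeal k d u v * lexIdeal k d u v ^ (t - 1) = lexIdeal k d u v ^ t := by
    rw [← pow_succ', Nat.sub_add_cancel ht]
  have hgen {a : Fin (n + 2) →₀ ℕ} (ha : a ∈ lexSeg d u v) : mon k a ∈ lexIdeal k d u v :=
    Ideal.subset_span (Set.mem_image_of_mem _ ha)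
  rw [hfactor, ← hpow]
  exact Ideal.mul_mem_mul (hgen (sub_single_zero_add_single_mem_lexSeg hu hu0 hlex i))
    (Ideal.pow_mem_pow (hgen (sndPowMulLast_mem_lexSeg hu hu0 hlex)) _)

end SocleMonomial

theorem statement2 {k : Type*} [Field k] {n d : ℕ} (hn : 2 ≤ n)
    (u v : Fin n →₀ ℕ) (hu : deg u = d)
    (hnu1 : u (⟨0, by omega⟩ : Fin n) = 1)
    (hlex : lexLe (v + Finsupp.single (⟨0, by omega⟩ : Fin n) 1) (u + Finsupp.single (⟨n-1, by omega⟩ : Fin n) 1))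
    (t : ℕ) (ht : 2 ≤ t) :
    mon k (u + (t-1) • (Finsupp.single (⟨1, by omega⟩ : Fin n) (d-1) + Finsupp.single (⟨n-1, by omega⟩ : Fin n) 1) - Finsupp.single (⟨0, by omega⟩ : Fin n) 1)
        ∉ (lexIdeal k d u v) ^ t ∧
    (∀ i : Fin n, X i * mon k (u + (t-1) • (Finsupp.single (⟨1, by omega⟩ : Fin n) (d-1) + Finsupp.single (⟨n-1, by omega⟩ : Fin n) 1) - Finsupp.single (⟨0, by omega⟩ : Fin n) 1)
        ∈ (lexIdeal k d u v) ^ t) ∧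
    quotDepth k ((lexIdeal k d u v) ^ t) = 0 := by
  -- After this substitution `⟨0, _⟩`, `⟨1, _⟩`, `⟨n-1, _⟩` are definitionally `0`, `1`, `Fin.last _`.
  obtain ⟨n, rfl⟩ : ∃ m, n = m + 2 := ⟨n - 2, by omega⟩
  have hnot : mon k (socleMonomial d t u) ∉ lexIdeal k d u v ^ t :=
    mon_socleMonomial_notMem hu hnu1 (by omega)
  have hmem := X_mul_mon_socleMonomial_mem (k := k) hu hnu1 hlex (t := t) (by omega)
  exact ⟨hnot, hmem, quotDepth_eq_zero_of_forall_X_mul_mem hnot hmem⟩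

end LexPaper
end
end

section
/- Let S = k[x_1,...,x_t, y_1,...,y_s] and let I = J·S + K·S where J is a monomial ideal of S_1 = k[x_1,...,x_t] and K is a monomial ideal of S_2 = k[y_1,...,y_s]. Then a prime p is an associated prime of S/I if and only if p = p_1·S + p_2·S for some p_1 ∈ Ass_{S_1}(S_1/J) and p_2 ∈ Ass_{S_2}(S_2/K). -/
open MvPolynomial

noncomputable section

namespace LexPaper

/-!
A monomial ideal is determined by the upper set `U` of exponents of the monomials it contains, and
its colon ideal by `x^a` is the monomial ideal of `{c | c + a ∈ U}`. Every associated prime of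
`S/I`, for `I` monomial, is such a colon ideal `I : x^a`. Indeed, let `P = I : f` be prime and
`g ∈ P` with leading exponent `B`: since `x^B` is a nonzerodivisor modulo the saturation
`I : (x^B)^∞`, which contains `g f`, it contains `f`, so `x^(nB) ∈ P` for some `n` and hence
`x^B ∈ P`. Thus `P` contains every monomial of each of its elements, so `P ⊆ I : x^a` for each
`a` in the support of `f`; conversely the intersection of the `I : x^a` lies in the prime `P`,
so one of them does.

For `I = J S + K S` the upper set of `I` is `{c | c₁ ∈ U_J ∨ c₂ ∈ U_K}`, hence
`I : x^a y^b = (J : x^a) S + (K : y^b) S`, and contracting to `S₁` recovers `J : x^a`, which is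
therefore prime when `I : x^a y^b` is.
-/

section MonomialIdeal

variable {R σ : Type*}

def monomialIdeal (R : Type*) [CommSemiring R] (U : UpperSet (σ →₀ ℕ)) :
    Ideal (MvPolynomial σ R) :=
  restrictSupportIdeal R U U.upper

variable [CommSemiring R] {U : UpperSet (σ →₀ ℕ)} {f g : MvPolynomial σ R}

lemma mem_monomialIdeal : f ∈ monomialIdeal R U ↔ ∀ b ∈ f.support, b ∈ U := .rfl

lemma monomial_one_mem_monomialIdeal [Nontrivial R] {a : σ →₀ ℕ} :
    monomial a (1 : R) ∈ monomialIdeal R U ↔ a ∈ U := by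
  classical
  simp [mem_monomialIdeal, support_monomial]

lemma monomialIdeal_eq_top_iff [Nontrivial R] : monomialIdeal R U = ⊤ ↔ (0 : σ →₀ ℕ) ∈ U := by
  rw [Ideal.eq_top_iff_one, ← C_1, C_apply, monomial_one_mem_monomialIdeal]

lemma span_monomial_image (G : Set (σ →₀ ℕ)) :
    Ideal.span ((monomial · (1 : R)) '' G) = monomialIdeal R (upperClosure G) := by
  ext f
  simp [mem_ideal_span_monomial_image, mem_monomialIdeal, mem_upperClosure]

lemma monomialIdeal_eq_span (U : UpperSet (σ →₀ ℕ)) :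
    monomialIdeal R U = Ideal.span ((monomial · (1 : R)) '' U) := by
  rw [span_monomial_image, UpperSet.upperClosure]

lemma support_mul_monomial_one (g : MvPolynomial σ R) (a : σ →₀ ℕ) :
    (g * monomial a 1).support = g.support.map (addRightEmbedding a) :=
  AddMonoidAlgebra.support_coeff_mul_single g _ (by simp) _

lemma mul_monomial_one_mem_monomialIdeal {a : σ →₀ ℕ} :
    g * monomial a 1 ∈ monomialIdeal R U ↔ ∀ b ∈ g.support, b + a ∈ U := by
  simp [mem_monomialIdeal, support_mul_monomial_one]

def upperColon (U : UpperSet (σ →₀ ℕ)) (a : σ →₀ ℕ) : UpperSet (σ →₀ ℕ) :=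
  ⟨(· + a) ⁻¹' U, U.upper.preimage (add_left_mono (a := a))⟩

@[simp] lemma mem_upperColon {a b : σ →₀ ℕ} : b ∈ upperColon U a ↔ b + a ∈ U := .rfl

lemma colon_monomialIdeal (a : σ →₀ ℕ) :
    (monomialIdeal R U).colon {monomial a 1} = monomialIdeal R (upperColon U a) := by
  ext g
  rw [Submodule.mem_colon_singleton, smul_eq_mul, mul_monomial_one_mem_monomialIdeal]
  rfl

end MonomialIdeal

lemma mem_associatedPrimes_quotient_iff {A : Type*} [CommRing A] [IsNoetherianRing A]
    {I P : Ideal A} : P ∈ associatedPrimes A (A ⧸ I) ↔ P.IsPrime ∧ ∃ f, P = I.colon {f} := by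
  have hcolon (f : A) :
      (⊥ : Submodule A (A ⧸ I)).colon {Ideal.Quotient.mk I f} = I.colon {f} := by
    ext r
    simp [Submodule.mem_colon_singleton, Algebra.smul_def, ← map_mul,
      Ideal.Quotient.eq_zero_iff_mem]
  rw [AssociatedPrimes.mem_iff, isAssociatedPrime_iff, Ideal.Quotient.mk_surjective.exists]
  simp only [hcolon]

section CommRing

variable {R σ : Type*} [CommRing R]

lemma exists_sub_mem_monomialIdeal (U : UpperSet (σ →₀ ℕ)) (f : MvPolynomial σ R) :
    ∃ f', f - f' ∈ monomialIdeal R U ∧ ∀ b ∈ f'.support, b ∉ U := by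
  classical
  set f' := ∑ b ∈ f.support with b ∉ U, monomial b (coeff b f)
  have hcoeff (b : σ →₀ ℕ) : coeff b f' = if b ∈ U then 0 else coeff b f := by
    simp only [f', coeff_sum, coeff_monomial, Finset.sum_ite_eq', Finset.mem_filter,
      mem_support_iff]
    by_cases hb : b ∈ U <;> by_cases hf : coeff b f = 0 <;> simp [hb, hf]
  refine ⟨f', mem_monomialIdeal.2 fun b hb => ?_, fun b hb hbU => ?_⟩
  · by_contra hbU
    rw [mem_support_iff, coeff_sub, hcoeff, if_neg hbU, sub_self] at hb
    exact hb rfl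
  · rw [mem_support_iff, hcoeff, if_pos hbU] at hb
    exact hb rfl

lemma monomial_mem_of_mem_support (m : MonomialOrder σ) {P : Ideal (MvPolynomial σ R)}
    (hP : ∀ g ∈ P, g ≠ 0 → monomial (m.degree g) 1 ∈ P)
    {g : MvPolynomial σ R} (hg : g ∈ P) {b : σ →₀ ℕ} (hb : b ∈ g.support) :
    monomial b 1 ∈ P := by
  induction hd : m.toSyn (m.degree g) using WellFoundedLT.induction generalizing g with
  | _ d ih =>
  have hg0 : g ≠ 0 := by rintro rfl; simp at hb
  by_cases hbd : b = m.degree g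
  · exact hbd ▸ hP g hg hg0
  have hbg : m.toSyn b < m.toSyn (m.degree g) :=
    (m.le_degree hb).lt_of_ne (m.toSyn.injective.ne hbd)
  have hdeg : m.degree g ≠ 0 := by
    rintro hd0
    rw [hd0, map_zero] at hbg
    exact (m.zero_le _).not_gt hbg
  have hlead : monomial (m.degree g) (m.leadingCoeff g) ∈ P := by
    simpa [C_mul_monomial] using P.mul_mem_left (C (m.leadingCoeff g)) (hP g hg hg0)
  have hb' : b ∈ (m.subLTerm g).support := by
    classical
    rwa [MonomialOrder.subLTerm, mem_support_iff, coeff_sub, coeff_monomial,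
      if_neg (Ne.symm hbd), sub_zero, ← mem_support_iff]
  exact ih _ (hd ▸ m.degree_sub_LTerm_lt hdeg) (P.sub_mem hg hlead) hb' rfl

lemma inf_colon_monomial_le_colon (I : Ideal (MvPolynomial σ R)) (f : MvPolynomial σ R) :
    f.support.inf (fun a => I.colon {monomial a 1}) ≤ I.colon {f} := by
  intro g hg
  rw [Submodule.mem_finsetInf] at hg
  rw [Submodule.mem_colon_singleton, smul_eq_mul, f.as_sum, Finset.mul_sum]
  refine I.sum_mem fun a ha => ?_
  have := I.mul_mem_left (C (coeff a f)) (Submodule.mem_colon_singleton.1 (hg a ha))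
  rwa [smul_eq_mul, mul_left_comm, C_mul_monomial, mul_one] at this

end CommRing

section IsDomain

variable {R σ : Type*} [CommRing R] [IsDomain R] {U : UpperSet (σ →₀ ℕ)}
  {f g h : MvPolynomial σ R} (m : MonomialOrder σ)

lemma mem_monomialIdeal_of_mul_mem (hsat : ∀ c, c + m.degree g ∈ U → c ∈ U) (hg : g ≠ 0)
    (hgh : g * h ∈ monomialIdeal R U) : h ∈ monomialIdeal R U := by
  obtain ⟨h', hhh', hh'⟩ := exists_sub_mem_monomialIdeal U h
  by_contra hh
  have hh'0 : h' ≠ 0 := by rintro rfl; simp_all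
  have hgh' : g * h' ∈ monomialIdeal R U := by
    simpa [mul_sub] using Ideal.sub_mem _ hgh (Ideal.mul_mem_left _ g hhh')
  have hdeg := mem_monomialIdeal.1 hgh' _ (m.degree_mem_support (mul_ne_zero hg hh'0))
  rw [m.degree_mul hg hh'0, add_comm] at hdeg
  exact hh' _ (m.degree_mem_support hh'0) (hsat _ hdeg)

lemma exists_monomial_nsmul_degree_mul_mem (hg : g ≠ 0) (hgh : g * h ∈ monomialIdeal R U) :
    ∃ n : ℕ, monomial (n • m.degree g) 1 * h ∈ monomialIdeal R U := by
  set B := m.degree g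
  -- the exponents of the saturation of the ideal with respect to `x^B`
  let V : UpperSet (σ →₀ ℕ) :=
    ⟨{c | ∃ n : ℕ, c + n • B ∈ U}, fun c d hcd ⟨n, hn⟩ => ⟨n, U.upper (by gcongr) hn⟩⟩
  have hUV : monomialIdeal R U ≤ monomialIdeal R V := fun f hf =>
    mem_monomialIdeal.2 fun c hc => ⟨0, by simpa using mem_monomialIdeal.1 hf c hc⟩
  have hsat (c : σ →₀ ℕ) (hc : c + B ∈ V) : c ∈ V := by
    obtain ⟨n, hn⟩ := hc
    exact ⟨n + 1, by rwa [add_nsmul, one_nsmul, add_comm (n • B), ← add_assoc]⟩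
  choose! n hn using mem_monomialIdeal.1 (mem_monomialIdeal_of_mul_mem m hsat hg (hUV hgh))
  refine ⟨∑ c ∈ h.support, n c, ?_⟩
  rw [mul_comm, mul_monomial_one_mem_monomialIdeal]
  intro c hc
  exact U.upper (by gcongr; exact Finset.single_le_sum (by simp) hc) (hn c hc)

lemma monomial_degree_mem_of_isPrime {P : Ideal (MvPolynomial σ R)} (hP : P.IsPrime)
    (hPf : P = (monomialIdeal R U).colon {f}) (hg : g ∈ P) (hg0 : g ≠ 0) :
    monomial (m.degree g) 1 ∈ P := by
  rw [hPf, Submodule.mem_colon_singleton, smul_eq_mul] at hg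
  obtain ⟨n, hn⟩ := exists_monomial_nsmul_degree_mul_mem m hg0 hg
  refine hP.mem_of_pow_mem n ?_
  rwa [hPf, Submodule.mem_colon_singleton, smul_eq_mul, monomial_pow, one_pow]

theorem exists_eq_monomialIdeal_upperColon [Finite σ] {P : Ideal (MvPolynomial σ R)}
    (hP : P.IsPrime) (hPf : P = (monomialIdeal R U).colon {f}) :
    ∃ a, P = monomialIdeal R (upperColon U a) := by
  obtain ⟨n, ⟨e⟩⟩ := Finite.exists_equiv_fin σ
  let : LinearOrder σ := LinearOrder.lift' e e.injective
  have hmon (g) (hg : g ∈ P) (b) (hb : b ∈ g.support) : monomial b 1 ∈ P :=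
    monomial_mem_of_mem_support MonomialOrder.lex
      (fun g hg hg0 => monomial_degree_mem_of_isPrime _ hP hPf hg hg0) hg hb
  obtain ⟨a, ha, hle⟩ := hP.inf_le'.1 (hPf ▸ inf_colon_monomial_le_colon _ f)
  refine ⟨a, le_antisymm (fun g hg => ?_) (colon_monomialIdeal (R := R) a ▸ hle)⟩
  refine mem_monomialIdeal.2 fun b hb => ?_
  have := hmon g hg b hb
  rw [hPf, Submodule.mem_colon_singleton, smul_eq_mul, mul_comm,
    mul_monomial_one_mem_monomialIdeal] at this
  simpa [add_comm] using this a ha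

theorem mem_associatedPrimes_monomialIdeal_iff [IsNoetherianRing R] [Finite σ]
    {P : Ideal (MvPolynomial σ R)} :
    P ∈ associatedPrimes _ (MvPolynomial σ R ⧸ monomialIdeal R U) ↔
      P.IsPrime ∧ ∃ a, P = monomialIdeal R (upperColon U a) := by
  rw [mem_associatedPrimes_quotient_iff]
  refine and_congr_right fun hP => ⟨fun ⟨f, hPf⟩ => exists_eq_monomialIdeal_upperColon hP hPf, ?_⟩
  rintro ⟨a, rfl⟩
  exact ⟨monomial a 1, (colon_monomialIdeal a).symm⟩

end IsDomain

section Sum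

open Finsupp (sumFinsuppAddEquivProdFinsupp mapDomain mapDomain_apply mapDomain_of_notMem_range)

variable {σ₁ σ₂ : Type*}

lemma sumFinsuppAddEquivProdFinsupp_mono :
    Monotone (sumFinsuppAddEquivProdFinsupp : (σ₁ ⊕ σ₂ →₀ ℕ) → _) :=
  fun _ _ h => ⟨fun x => h (Sum.inl x), fun y => h (Sum.inr y)⟩

@[simp] lemma sumFinsuppAddEquivProdFinsupp_mapDomain_inl (b : σ₁ →₀ ℕ) :
    sumFinsuppAddEquivProdFinsupp (mapDomain (Sum.inl : σ₁ → σ₁ ⊕ σ₂) b) = (b, 0) := by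
  ext x <;> simp [mapDomain_apply Sum.inl_injective, mapDomain_of_notMem_range]

@[simp] lemma sumFinsuppAddEquivProdFinsupp_mapDomain_inr (b : σ₂ →₀ ℕ) :
    sumFinsuppAddEquivProdFinsupp (mapDomain (Sum.inr : σ₂ → σ₁ ⊕ σ₂) b) = (0, b) := by
  ext x <;> simp [mapDomain_apply Sum.inr_injective, mapDomain_of_notMem_range]

def sumUpperSet (U₁ : UpperSet (σ₁ →₀ ℕ)) (U₂ : UpperSet (σ₂ →₀ ℕ)) :
    UpperSet (σ₁ ⊕ σ₂ →₀ ℕ) :=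
  ⟨{c | (sumFinsuppAddEquivProdFinsupp c).1 ∈ U₁ ∨ (sumFinsuppAddEquivProdFinsupp c).2 ∈ U₂},
    fun _ _ h => Or.imp (U₁.upper (sumFinsuppAddEquivProdFinsupp_mono h).1)
      (U₂.upper (sumFinsuppAddEquivProdFinsupp_mono h).2)⟩

variable {U₁ : UpperSet (σ₁ →₀ ℕ)} {U₂ : UpperSet (σ₂ →₀ ℕ)}

@[simp] lemma mem_sumUpperSet {c : σ₁ ⊕ σ₂ →₀ ℕ} :
    c ∈ sumUpperSet U₁ U₂ ↔
      (sumFinsuppAddEquivProdFinsupp c).1 ∈ U₁ ∨ (sumFinsuppAddEquivProdFinsupp c).2 ∈ U₂ :=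
  .rfl

lemma upperColon_sumUpperSet (a : σ₁ ⊕ σ₂ →₀ ℕ) :
    upperColon (sumUpperSet U₁ U₂) a =
      sumUpperSet (upperColon U₁ (sumFinsuppAddEquivProdFinsupp a).1)
        (upperColon U₂ (sumFinsuppAddEquivProdFinsupp a).2) := by
  ext c
  simp only [SetLike.mem_coe, mem_upperColon, mem_sumUpperSet, map_add, Prod.fst_add,
    Prod.snd_add]

lemma upperClosure_image_mapDomain_union (U₁ : UpperSet (σ₁ →₀ ℕ)) (U₂ : UpperSet (σ₂ →₀ ℕ)) :
    upperClosure (mapDomain Sum.inl '' U₁ ∪ mapDomain Sum.inr '' U₂) = sumUpperSet U₁ U₂ := by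
  ext c
  simp only [mem_upperClosure, Set.mem_union, Set.mem_image, SetLike.mem_coe, mem_sumUpperSet]
  constructor
  · rintro ⟨_, ⟨b, hb, rfl⟩ | ⟨b, hb, rfl⟩, hbc⟩
    · exact Or.inl (U₁.upper (by
        simpa only [sumFinsuppAddEquivProdFinsupp_mapDomain_inl] using
          (sumFinsuppAddEquivProdFinsupp_mono hbc).1) hb)
    · exact Or.inr (U₂.upper (by
        simpa only [sumFinsuppAddEquivProdFinsupp_mapDomain_inr] using
          (sumFinsuppAddEquivProdFinsupp_mono hbc).2) hb)
  · rintro (hc | hc)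
    · refine ⟨_, Or.inl ⟨_, hc, rfl⟩, fun x => ?_⟩
      cases x <;> simp [mapDomain_apply Sum.inl_injective, mapDomain_of_notMem_range]
    · refine ⟨_, Or.inr ⟨_, hc, rfl⟩, fun x => ?_⟩
      cases x <;> simp [mapDomain_apply Sum.inr_injective, mapDomain_of_notMem_range]

variable {R : Type*} [CommSemiring R]

lemma map_rename_inl_sup_map_rename_inr (U₁ : UpperSet (σ₁ →₀ ℕ)) (U₂ : UpperSet (σ₂ →₀ ℕ)) :
    (monomialIdeal R U₁).map (rename (Sum.inl : σ₁ → σ₁ ⊕ σ₂)).toRingHom ⊔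
        (monomialIdeal R U₂).map (rename (Sum.inr : σ₂ → σ₁ ⊕ σ₂)).toRingHom =
      monomialIdeal R (sumUpperSet U₁ U₂) := by
  rw [monomialIdeal_eq_span, monomialIdeal_eq_span, Ideal.map_span, Ideal.map_span,
    ← Ideal.span_union, ← upperClosure_image_mapDomain_union, ← span_monomial_image,
    Set.image_union, Set.image_image, Set.image_image, Set.image_image, Set.image_image]
  simp [rename_monomial]

lemma comap_rename_inl_monomialIdeal_sumUpperSet (h : (0 : σ₂ →₀ ℕ) ∉ U₂) :
    (monomialIdeal R (sumUpperSet U₁ U₂)).comap (rename Sum.inl).toRingHom =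
      monomialIdeal R U₁ := by
  classical
  ext g
  simp only [Ideal.mem_comap, AlgHom.toRingHom_eq_coe, RingHom.coe_coe, mem_monomialIdeal,
    support_rename_of_injective Sum.inl_injective, Finset.forall_mem_image, mem_sumUpperSet,
    sumFinsuppAddEquivProdFinsupp_mapDomain_inl, h, or_false]

lemma comap_rename_inr_monomialIdeal_sumUpperSet (h : (0 : σ₁ →₀ ℕ) ∉ U₁) :
    (monomialIdeal R (sumUpperSet U₁ U₂)).comap (rename Sum.inr).toRingHom =
      monomialIdeal R U₂ := by
  classical
  ext g
  simp only [Ideal.mem_comap, AlgHom.toRingHom_eq_coe, RingHom.coe_coe, mem_monomialIdeal,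
    support_rename_of_injective Sum.inr_injective, Finset.forall_mem_image, mem_sumUpperSet,
    sumFinsuppAddEquivProdFinsupp_mapDomain_inr, h, false_or]

end Sum

lemma span_mon_eq_monomialIdeal {k σ : Type*} [Field k] (G : Set (σ →₀ ℕ)) :
    Ideal.span (mon k '' G) = monomialIdeal k (upperClosure G) :=
  span_monomial_image G

theorem statement7 {k : Type*} [Field k] {t s : ℕ}
    (J : Ideal (MvPolynomial (Fin t) k)) (K : Ideal (MvPolynomial (Fin s) k))
    (hJ : ∃ G : Set (Fin t →₀ ℕ), J = Ideal.span (mon k '' G))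
    (hK : ∃ G : Set (Fin s →₀ ℕ), K = Ideal.span (mon k '' G))
    (p : Ideal (MvPolynomial (Fin t ⊕ Fin s) k)) (hp : p.IsPrime) :
    p ∈ associatedPrimes (MvPolynomial (Fin t ⊕ Fin s) k)
        (MvPolynomial (Fin t ⊕ Fin s) k ⧸ (J.map (MvPolynomial.rename (Sum.inl : Fin t → Fin t ⊕ Fin s)).toRingHom ⊔
                 K.map (MvPolynomial.rename (Sum.inr : Fin s → Fin t ⊕ Fin s)).toRingHom)) ↔
      ∃ p₁ ∈ associatedPrimes (MvPolynomial (Fin t) k) (MvPolynomial (Fin t) k ⧸ J),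
        ∃ p₂ ∈ associatedPrimes (MvPolynomial (Fin s) k) (MvPolynomial (Fin s) k ⧸ K),
          p = p₁.map (MvPolynomial.rename (Sum.inl : Fin t → Fin t ⊕ Fin s)).toRingHom ⊔
              p₂.map (MvPolynomial.rename (Sum.inr : Fin s → Fin t ⊕ Fin s)).toRingHom := by
  obtain ⟨G₁, rfl⟩ := hJ
  obtain ⟨G₂, rfl⟩ := hK
  rw [span_mon_eq_monomialIdeal, span_mon_eq_monomialIdeal, map_rename_inl_sup_map_rename_inr]
  simp only [mem_associatedPrimes_monomialIdeal_iff]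
  constructor
  · rintro ⟨hp, a, rfl⟩
    rw [upperColon_sumUpperSet] at hp ⊢
    set V₁ := upperColon (upperClosure G₁) (Finsupp.sumFinsuppAddEquivProdFinsupp a).1
    set V₂ := upperColon (upperClosure G₂) (Finsupp.sumFinsuppAddEquivProdFinsupp a).2
    have h0 : (0 : Fin t →₀ ℕ) ∉ V₁ ∧ (0 : Fin s →₀ ℕ) ∉ V₂ := by
      simpa [monomialIdeal_eq_top_iff, not_or] using hp.ne_top
    refine ⟨monomialIdeal k V₁, ⟨?_, _, rfl⟩, monomialIdeal k V₂, ⟨?_, _, rfl⟩,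
      (map_rename_inl_sup_map_rename_inr V₁ V₂).symm⟩
    · rw [← comap_rename_inl_monomialIdeal_sumUpperSet h0.2]
      exact Ideal.comap_isPrime _ _
    · rw [← comap_rename_inr_monomialIdeal_sumUpperSet h0.1]
      exact Ideal.comap_isPrime _ _
  · rintro ⟨_, ⟨-, a₁, rfl⟩, _, ⟨-, a₂, rfl⟩, rfl⟩
    rw [map_rename_inl_sup_map_rename_inr] at hp ⊢
    refine ⟨hp, Finsupp.sumFinsuppAddEquivProdFinsupp.symm (a₁, a₂), ?_⟩
    rw [upperColon_sumUpperSet, AddEquiv.apply_symm_apply]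

end LexPaper
end
end
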